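/- For every Schwartz function f on ℂⁿ, ⟨ℒf, f⟩_{L²} = Σ_{i=1}ⁿ ‖b_i⁺ f‖²_{L²} ≥ 0, where ℒ = Σ_i b_i b_i⁺; in particular ℒ is a nonnegative formally self-adjoint operator on Schwartz functions. -/

import Mathlib

open Complex MeasureTheory
open scoped Real BigOperators

noncomputable section

/-- Wirtinger derivative `∂/∂z_j` on functions on `ℂⁿ ≅ ℝ²ⁿ`. -/
def wd {n : ℕ} (j : Fin n) (f : (Fin n → ℂ) → ℂ) (Z : Fin n → ℂ) : ℂ :=
  (1/2) * (fderiv ℝ f Z (Pi.single j 1) - Complex.I * fderiv ℝ f Z (Pi.single j Complex.I))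

/-- Wirtinger derivative `∂/∂z̄_j`. -/
def wdBar {n : ℕ} (j : Fin n) (f : (Fin n → ℂ) → ℂ) (Z : Fin n → ℂ) : ℂ :=
  (1/2) * (fderiv ℝ f Z (Pi.single j 1) + Complex.I * fderiv ℝ f Z (Pi.single j Complex.I))

/-- `b_j = -2 ∂/∂z_j + π z̄_j`. -/
def bOp {n : ℕ} (j : Fin n) (f : (Fin n → ℂ) → ℂ) (Z : Fin n → ℂ) : ℂ :=
  -2 * wd j f Z + (Real.pi : ℂ) * (starRingEnd ℂ) (Z j) * f Z

/-- `b_j⁺ = 2 ∂/∂z̄_j + π z_j`. -/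
def bPlus {n : ℕ} (j : Fin n) (f : (Fin n → ℂ) → ℂ) (Z : Fin n → ℂ) : ℂ :=
  2 * wdBar j f Z + (Real.pi : ℂ) * Z j * f Z

/-- The Gaussian kernel `𝒫(Z,Z')`. -/
def Pker {n : ℕ} (Z Z' : Fin n → ℂ) : ℂ :=
  Complex.exp (-((Real.pi : ℂ)/2) * ∑ i, ((Complex.normSq (Z i) : ℂ)
    + (Complex.normSq (Z' i) : ℂ) - 2 * Z i * (starRingEnd ℂ) (Z' i)))

/-!
Integrating by parts along the real directions `eⱼ` and `i·eⱼ` shows that, for the pairing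
`⟨g, h⟩ = ∫ g h̄` on Schwartz space, `∂/∂zⱼ` is minus the adjoint of `∂/∂z̄ⱼ`, while
multiplication by `z̄ⱼ` is adjoint to multiplication by `zⱼ`. Hence `⟨bⱼ g, h⟩ = ⟨g, bⱼ⁺ h⟩`,
and `⟨ℒ f, f⟩ = ∑ⱼ ⟨bⱼ⁺ f, bⱼ⁺ f⟩ = ∑ⱼ ‖bⱼ⁺ f‖²`.
-/

open SchwartzMap LineDeriv ComplexConjugate

section L2Inner

variable {D : Type*} [NormedAddCommGroup D] [NormedSpace ℝ D] [MeasurableSpace D] [BorelSpace D]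
  [FiniteDimensional ℝ D] (μ : Measure D) [μ.IsAddHaarMeasure]

def mulConjL : ℂ →L[ℝ] ℂ →L[ℝ] ℂ :=
  ((ContinuousLinearMap.mul ℝ ℂ).flip ∘L (conjCLE : ℂ →L[ℝ] ℂ)).flip

lemma mulConjL_apply (a b : ℂ) : mulConjL a b = a * conj b := rfl

lemma integrable_mul_conj (g h : 𝓢(D, ℂ)) : Integrable (fun x => g x * conj (h x)) μ :=
  (bilinLeftCLM mulConjL h.hasTemperateGrowth g).integrable

def l2Inner : 𝓢(D, ℂ) →ₗ[ℂ] 𝓢(D, ℂ) →ₗ⋆[ℂ] ℂ :=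
  LinearMap.mk₂'ₛₗ (RingHom.id ℂ) (starRingEnd ℂ) (fun g h => ∫ x, g x * conj (h x) ∂μ)
    (fun g₁ g₂ h => by
      simp only [add_apply, add_mul]
      exact integral_add (integrable_mul_conj μ g₁ h) (integrable_mul_conj μ g₂ h))
    (fun c g h => by
      simp only [smul_apply, smul_eq_mul, mul_assoc, integral_const_mul, RingHom.id_apply])
    (fun g h₁ h₂ => by
      simp only [add_apply, map_add, mul_add]
      exact integral_add (integrable_mul_conj μ g h₁) (integrable_mul_conj μ g h₂))
    (fun c g h => by
      simp only [smul_apply, smul_eq_mul, map_mul, mul_left_comm (g _), integral_const_mul])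

lemma l2Inner_apply (g h : 𝓢(D, ℂ)) : l2Inner μ g h = ∫ x, g x * conj (h x) ∂μ := rfl

lemma l2Inner_self (g : 𝓢(D, ℂ)) : l2Inner μ g g = ((∫ x, normSq (g x) ∂μ : ℝ) : ℂ) := by
  simp only [l2Inner_apply, mul_conj]
  exact integral_ofReal

lemma l2Inner_lineDerivOp_left (g h : 𝓢(D, ℂ)) (v : D) :
    l2Inner μ (∂_{v} g) h = -l2Inner μ g (∂_{v} h) := by
  simp only [l2Inner_apply, ← mulConjL_apply,
    integral_bilinear_lineDerivOp_right_eq_neg_left g h mulConjL v, neg_neg]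

end L2Inner

section SchwartzOperators

variable {n : ℕ} (μ : Measure (Fin n → ℂ)) [μ.IsAddHaarMeasure]

local notation "𝓢ₙ" => 𝓢(Fin n → ℂ, ℂ)

def wirtingerCLM (j : Fin n) : 𝓢ₙ →L[ℂ] 𝓢ₙ :=
  (2 : ℂ)⁻¹ • (lineDerivOpCLM ℂ 𝓢ₙ (Pi.single j 1 : Fin n → ℂ)
    - I • lineDerivOpCLM ℂ 𝓢ₙ (Pi.single j I : Fin n → ℂ))

def wirtingerBarCLM (j : Fin n) : 𝓢ₙ →L[ℂ] 𝓢ₙ :=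
  (2 : ℂ)⁻¹ • (lineDerivOpCLM ℂ 𝓢ₙ (Pi.single j 1 : Fin n → ℂ)
    + I • lineDerivOpCLM ℂ 𝓢ₙ (Pi.single j I : Fin n → ℂ))

def coordMulCLM (j : Fin n) : 𝓢ₙ →L[ℂ] 𝓢ₙ := smulLeftCLM ℂ (fun Z => Z j)

def conjCoordMulCLM (j : Fin n) : 𝓢ₙ →L[ℂ] 𝓢ₙ := smulLeftCLM ℂ (fun Z => conj (Z j))

lemma hasTemperateGrowth_coord (j : Fin n) : (fun Z : Fin n → ℂ => Z j).HasTemperateGrowth :=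
  (ContinuousLinearMap.proj j : (Fin n → ℂ) →L[ℝ] ℂ).hasTemperateGrowth

lemma hasTemperateGrowth_conj_coord (j : Fin n) :
    (fun Z : Fin n → ℂ => conj (Z j)).HasTemperateGrowth :=
  ((conjCLE : ℂ →L[ℝ] ℂ) ∘L (ContinuousLinearMap.proj j : (Fin n → ℂ) →L[ℝ] ℂ)).hasTemperateGrowth

lemma coe_wirtingerCLM (j : Fin n) (f : 𝓢ₙ) : ⇑(wirtingerCLM j f) = wd j f := by
  ext Z
  simp only [wirtingerCLM, wd, smul_apply, sub_apply, lineDerivOpCLM_apply,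
    lineDerivOp_apply_eq_fderiv, smul_eq_mul]
  ring

lemma coe_wirtingerBarCLM (j : Fin n) (f : 𝓢ₙ) : ⇑(wirtingerBarCLM j f) = wdBar j f := by
  ext Z
  simp only [wirtingerBarCLM, wdBar, smul_apply, add_apply, lineDerivOpCLM_apply,
    lineDerivOp_apply_eq_fderiv, smul_eq_mul]
  ring

lemma l2Inner_wirtingerCLM_left (j : Fin n) (g h : 𝓢ₙ) :
    l2Inner μ (wirtingerCLM j g) h = -l2Inner μ g (wirtingerBarCLM j h) := by
  simp only [wirtingerCLM, wirtingerBarCLM, smul_apply, sub_apply, add_apply,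
    lineDerivOpCLM_apply, map_smul, map_sub, map_add, map_smulₛₗ, LinearMap.smul_apply,
    LinearMap.sub_apply, l2Inner_lineDerivOp_left, smul_eq_mul, map_inv₀, map_ofNat, conj_I]
  ring

lemma l2Inner_conjCoordMulCLM_left (j : Fin n) (g h : 𝓢ₙ) :
    l2Inner μ (conjCoordMulCLM j g) h = l2Inner μ g (coordMulCLM j h) := by
  simp only [l2Inner_apply, conjCoordMulCLM, coordMulCLM,
    smulLeftCLM_apply_apply (hasTemperateGrowth_coord j),
    smulLeftCLM_apply_apply (hasTemperateGrowth_conj_coord j), smul_eq_mul, map_mul]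
  congr 1 with Z
  ring

def bOpCLM (j : Fin n) : 𝓢ₙ →L[ℂ] 𝓢ₙ := (-2 : ℂ) • wirtingerCLM j + (π : ℂ) • conjCoordMulCLM j

def bPlusCLM (j : Fin n) : 𝓢ₙ →L[ℂ] 𝓢ₙ := (2 : ℂ) • wirtingerBarCLM j + (π : ℂ) • coordMulCLM j

lemma coe_bOpCLM (j : Fin n) (f : 𝓢ₙ) : ⇑(bOpCLM j f) = bOp j f := by
  ext Z
  simp only [bOpCLM, add_apply, smul_apply, coe_wirtingerCLM, conjCoordMulCLM,
    smulLeftCLM_apply_apply (hasTemperateGrowth_conj_coord j), bOp, smul_eq_mul]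
  ring

lemma coe_bPlusCLM (j : Fin n) (f : 𝓢ₙ) : ⇑(bPlusCLM j f) = bPlus j f := by
  ext Z
  simp only [bPlusCLM, add_apply, smul_apply, coe_wirtingerBarCLM, coordMulCLM,
    smulLeftCLM_apply_apply (hasTemperateGrowth_coord j), bPlus, smul_eq_mul]
  ring

lemma l2Inner_bOpCLM_left (j : Fin n) (g h : 𝓢ₙ) :
    l2Inner μ (bOpCLM j g) h = l2Inner μ g (bPlusCLM j h) := by
  simp only [bOpCLM, bPlusCLM, add_apply, smul_apply, map_add, map_smul, map_smulₛₗ,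
    LinearMap.add_apply, LinearMap.smul_apply, l2Inner_wirtingerCLM_left,
    l2Inner_conjCoordMulCLM_left, smul_eq_mul, map_ofNat, conj_ofReal]
  ring

end SchwartzOperators

/-- ⟨ℒ f, f⟩ = Σ_i ‖b_i⁺ f‖² ≥ 0 on Schwartz functions. -/
theorem L_nonneg {n : ℕ} (f : SchwartzMap (Fin n → ℂ) ℂ) :
    (∫ Z : Fin n → ℂ, (∑ i, bOp i (bPlus i (⇑f)) Z) * (starRingEnd ℂ) (f Z))
      = ((∑ i, ∫ Z : Fin n → ℂ, Complex.normSq (bPlus i (⇑f) Z) : ℝ) : ℂ) ∧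
    0 ≤ (∑ i, ∫ Z : Fin n → ℂ, Complex.normSq (bPlus i (⇑f) Z) : ℝ) := by
  simp only [← coe_bPlusCLM, ← coe_bOpCLM]
  refine ⟨?_, Finset.sum_nonneg fun i _ => integral_nonneg fun Z => normSq_nonneg _⟩
  calc ∫ Z, (∑ i, bOpCLM i (bPlusCLM i f) Z) * conj (f Z)
      = l2Inner volume (∑ i, bOpCLM i (bPlusCLM i f)) f := by
        simp only [l2Inner_apply, sum_apply]
    _ = ∑ i, l2Inner volume (bPlusCLM i f) (bPlusCLM i f) := by
        simp only [map_sum, LinearMap.sum_apply, l2Inner_bOpCLM_left]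
    _ = _ := by simp only [l2Inner_self, ofReal_sum]
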